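/- Let {B_i}, i = 0,…,k, be the chain of all locally-dense subgraphs of G, ordered by inclusion. Then B_0 = ∅, B_k = V, and for each i ≥ 1, B_i maximizes the outer density d(W, B_{i-1}) over all W that properly contain B_{i-1}. -/

import Mathlib

open Finset

variable {V : Type*}

/-- Edges of `G` with both endpoints in `X`. -/
def innerEdges [Fintype V] [DecidableEq V] (G : SimpleGraph V) [DecidableRel G.Adj]
    (X : Finset V) : Finset (Sym2 V) :=
  G.edgeFinset.filter (fun e => ∀ v ∈ e, v ∈ X)

/-- Marginal edges `Ẽ(X,Y) = E(X) ∪ E(X,Y)` (for disjoint `X`, `Y`):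
edges with both endpoints in `X ∪ Y`, at least one in `X`. -/
def margEdges [Fintype V] [DecidableEq V] (G : SimpleGraph V) [DecidableRel G.Adj]
    (X Y : Finset V) : Finset (Sym2 V) :=
  G.edgeFinset.filter (fun e => (∀ v ∈ e, v ∈ X ∪ Y) ∧ ∃ v ∈ e, v ∈ X)

/-- Outer density `d(X,Y) = |Ẽ(X \ Y, Y)| / |X \ Y|`. -/
def outDensity [Fintype V] [DecidableEq V] (G : SimpleGraph V) [DecidableRel G.Adj]
    (X Y : Finset V) : ℚ :=
  ((margEdges G (X \ Y) Y).card : ℚ) / ((X \ Y).card : ℚ)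

/-- `W` is locally dense: there is no nonempty `X ⊆ W` and nonempty `Y` with `Y ∩ W = ∅`
such that `d(X, W \ X) ≤ d(Y, W)`. -/
def LocallyDense [Fintype V] [DecidableEq V] (G : SimpleGraph V) [DecidableRel G.Adj]
    (W : Finset V) : Prop :=
  ¬ ∃ X Y : Finset V, X.Nonempty ∧ Y.Nonempty ∧ X ⊆ W ∧ Y ∩ W = ∅ ∧
      outDensity G X (W \ X) ≤ outDensity G Y W

/-- Number of neighbors of `x` in `U`. -/
def degIn [DecidableEq V] (G : SimpleGraph V) [DecidableRel G.Adj] (x : V) (U : Finset V) : ℕ :=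
  (U.filter (G.Adj x)).card

/-! Let `A` be locally dense with `A ≠ V`, and among the nonempty sets `S` outside `A` of maximal
density `ρ = d(S, A)` take one of maximal size. Then `A ∪ S` is locally dense: a part of `A` has
density above `ρ` over the rest of `A` (local density of `A`), a part of `S` has density at least
`ρ` since the rest of `S` has density at most `ρ`, and a set outside `A ∪ S` has density below `ρ`
because adding it to `S` would otherwise give a larger maximiser. Hence the successor `C` of `A`
in the chain satisfies `A ⊂ C ⊆ A ∪ S`; were `C ≠ A ∪ S`, local density of `C` would make `S \ C`
sparser over `C` than `C \ A` over `A`, contradicting the density `ρ` of `S`. So `C = A ∪ S`, of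
density `ρ`, the maximum. -/

theorem ssubset_union_of_disjoint [DecidableEq V] {s t : Finset V} (ht : t.Nonempty)
    (h : Disjoint t s) : s ⊂ s ∪ t :=
  left_lt_sup.2 fun hts => ht.ne_empty (disjoint_self.1 (h.mono_right hts))

section
variable [Fintype V] [DecidableEq V] (G : SimpleGraph V) [DecidableRel G.Adj]

@[simp]
theorem margEdges_empty_left (A : Finset V) : margEdges G ∅ A = ∅ := by
  ext e; simp [margEdges]

theorem margEdges_union (A P Q : Finset V) :
    margEdges G (P ∪ Q) A = margEdges G P A ∪ margEdges G Q (A ∪ P) := by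
  ext e
  simp only [margEdges, mem_filter, mem_union]
  grind

theorem margEdges_mono_right {X Y Y' : Finset V} (h : Y ⊆ Y') :
    margEdges G X Y ⊆ margEdges G X Y' := by
  intro e
  simp only [margEdges, mem_filter, mem_union]
  grind

theorem card_margEdges_union {A P Q : Finset V} (h : Disjoint Q (A ∪ P)) :
    #(margEdges G (P ∪ Q) A) = #(margEdges G P A) + #(margEdges G Q (A ∪ P)) := by
  rw [margEdges_union, card_union_of_disjoint (disjoint_left.2 ?_)]
  simp only [margEdges, mem_filter, mem_union]
  rintro e ⟨-, hPA, -⟩ ⟨-, -, v, hv, hvQ⟩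
  exact disjoint_left.1 h hvQ (by grind)

theorem outDensity_of_disjoint {X Y : Finset V} (h : Disjoint X Y) :
    outDensity G X Y = #(margEdges G X Y) / #X := by
  rw [outDensity, sdiff_eq_self_of_disjoint h]

theorem outDensity_union_left {A S : Finset V} (h : Disjoint S A) :
    outDensity G (A ∪ S) A = outDensity G S A := by
  rw [outDensity, outDensity, union_sdiff_cancel_left h.symm, sdiff_eq_self_of_disjoint h]

theorem card_margEdges_eq_outDensity_mul {X Y : Finset V} (h : Disjoint X Y) :
    (#(margEdges G X Y) : ℚ) = outDensity G X Y * #X := by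
  rcases X.eq_empty_or_nonempty with rfl | hX
  · simp
  · rw [outDensity_of_disjoint G h, div_mul_cancel₀ _ (by positivity)]

theorem locallyDense_empty : LocallyDense G ∅ := by
  rintro ⟨X, -, hX, -, hXsub, -⟩
  exact hX.ne_empty (subset_empty.1 hXsub)

theorem locallyDense_univ : LocallyDense G univ := by
  rintro ⟨-, Y, -, hY, -, hYuniv, -⟩
  exact hY.ne_empty (by simpa using hYuniv)

theorem LocallyDense.outDensity_mul_card_le {A S X : Finset V} (hA : LocallyDense G A)
    (hS : S.Nonempty) (hSA : Disjoint S A) (hXA : X ⊆ A) :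
    outDensity G S A * #X ≤ #(margEdges G X (A \ X)) := by
  rcases X.eq_empty_or_nonempty with rfl | hX
  · simp
  have hlt : outDensity G S A < outDensity G X (A \ X) :=
    not_le.1 fun h => hA ⟨X, S, hX, hS, hXA, disjoint_iff_inter_eq_empty.1 hSA, h⟩
  rw [outDensity_of_disjoint G disjoint_sdiff, lt_div_iff₀ (by positivity)] at hlt
  exact hlt.le

theorem outDensity_lt_of_maximal {A S Y : Finset V} (hSA : Disjoint S A)
    (hstrict : ∀ T, Disjoint T A → S ⊂ T → (#(margEdges G T A) : ℚ) < outDensity G S A * #T)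
    (hY : Y.Nonempty) (hYAS : Disjoint Y (A ∪ S)) :
    outDensity G Y (A ∪ S) < outDensity G S A := by
  have hSY : Disjoint Y S := hYAS.mono_right subset_union_right
  have hlt := hstrict (S ∪ Y) (disjoint_union_left.2 ⟨hSA, hYAS.mono_right subset_union_left⟩)
    (ssubset_union_of_disjoint hY hSY)
  rw [card_margEdges_union G hYAS, card_union_of_disjoint hSY.symm] at hlt
  push_cast at hlt
  rw [outDensity_of_disjoint G hYAS, div_lt_iff₀ (by positivity)]
  linarith [card_margEdges_eq_outDensity_mul G hSA]

theorem le_outDensity_of_maximal {A S X : Finset V} (hA : LocallyDense G A) (hS : S.Nonempty)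
    (hSA : Disjoint S A)
    (hmax : ∀ T, Disjoint T A → (#(margEdges G T A) : ℚ) ≤ outDensity G S A * #T)
    (hX : X.Nonempty) (hXAS : X ⊆ A ∪ S) :
    outDensity G S A ≤ outDensity G X ((A ∪ S) \ X) := by
  set ρ := outDensity G S A
  have hA_part : ρ * #(A ∩ X) ≤ #(margEdges G (A ∩ X) (A \ (A ∩ X))) :=
    hA.outDensity_mul_card_le G hS hSA inter_subset_left
  have hS_part : ρ * #(S ∩ X) ≤ #(margEdges G (S ∩ X) (A ∪ (S \ X))) := by
    have hsplit := card_margEdges_union G (A := A) (P := S \ X) (Q := S ∩ X)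
      (by grind [disjoint_left])
    rw [sdiff_union_inter] at hsplit
    have hcard := card_sdiff_add_card_inter S X
    have hrest := hmax (S \ X) (hSA.mono_left sdiff_subset)
    have hS_eq : (#(margEdges G S A) : ℚ) = ρ * #S := card_margEdges_eq_outDensity_mul G hSA
    rw [hsplit, ← hcard] at hS_eq
    push_cast at hS_eq
    linarith
  have hsplit := card_margEdges_union G (A := (A ∪ S) \ X) (P := A ∩ X) (Q := S ∩ X)
    (by grind [disjoint_left])
  rw [← union_inter_distrib_right, inter_eq_right.2 hXAS] at hsplit
  have h1 := card_le_card (margEdges_mono_right G (X := A ∩ X)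
    (show A \ (A ∩ X) ⊆ (A ∪ S) \ X by grind))
  have h2 := card_le_card (margEdges_mono_right G (X := S ∩ X)
    (show A ∪ (S \ X) ⊆ (A ∪ S) \ X ∪ (A ∩ X) by grind))
  have hcard : #X = #(A ∩ X) + #(S ∩ X) := by
    rw [← card_union_of_disjoint (by grind [disjoint_left]), ← union_inter_distrib_right,
      inter_eq_right.2 hXAS]
  rw [outDensity_of_disjoint G disjoint_sdiff, le_div_iff₀ (by positivity), hcard, hsplit]
  push_cast
  linarith [(Nat.cast_le (α := ℚ)).2 h1, (Nat.cast_le (α := ℚ)).2 h2]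

theorem locallyDense_union_of_maximal {A S : Finset V} (hA : LocallyDense G A)
    (hS : S.Nonempty) (hSA : Disjoint S A)
    (hmax : ∀ T, Disjoint T A → (#(margEdges G T A) : ℚ) ≤ outDensity G S A * #T)
    (hstrict : ∀ T, Disjoint T A → S ⊂ T → (#(margEdges G T A) : ℚ) < outDensity G S A * #T) :
    LocallyDense G (A ∪ S) := by
  rintro ⟨X, Y, hX, hY, hXAS, hYAS, hle⟩
  have hX_side := le_outDensity_of_maximal G hA hS hSA hmax hX hXAS
  have hY_side := outDensity_lt_of_maximal G hSA hstrict hY (disjoint_iff_inter_eq_empty.2 hYAS)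
  linarith

theorem exists_maximal_densest {A : Finset V} (hA : A ≠ univ) :
    ∃ S, S.Nonempty ∧ Disjoint S A ∧
      (∀ T, Disjoint T A → (#(margEdges G T A) : ℚ) ≤ outDensity G S A * #T) ∧
      ∀ T, Disjoint T A → S ⊂ T → (#(margEdges G T A) : ℚ) < outDensity G S A * #T := by
  have hmem : ∀ T, T ∈ Aᶜ.powerset ↔ Disjoint T A := by
    simp [subset_compl_iff_disjoint_right]
  obtain ⟨S₀, hS₀, hS₀max⟩ := (Aᶜ.powerset.filter Finset.Nonempty).exists_max_image
    (outDensity G · A) ⟨Aᶜ, mem_filter.2 ⟨mem_powerset_self _,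
      nonempty_iff_ne_empty.2 ((compl_eq_empty_iff A).not.2 hA)⟩⟩
  rw [mem_filter, hmem] at hS₀
  set ρ := outDensity G S₀ A
  have hρ : ∀ T, Disjoint T A → (#(margEdges G T A) : ℚ) ≤ ρ * #T := by
    intro T hTA
    rcases T.eq_empty_or_nonempty with rfl | hT
    · simp
    rw [card_margEdges_eq_outDensity_mul G hTA]
    exact mul_le_mul_of_nonneg_right (hS₀max T (by simp [hmem, hTA, hT])) (Nat.cast_nonneg _)
  -- Among the sets of maximal density take one of maximal size: every proper extension of it
  -- is then strictly sparser.
  set tight := Aᶜ.powerset.filter fun T => (#(margEdges G T A) : ℚ) = ρ * #T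
  have hS₀tight : S₀ ∈ tight :=
    mem_filter.2 ⟨(hmem _).2 hS₀.1, card_margEdges_eq_outDensity_mul G hS₀.1⟩
  obtain ⟨S, hS, hSmax⟩ := tight.exists_max_image card ⟨S₀, hS₀tight⟩
  rw [mem_filter, hmem] at hS
  have hSne : S.Nonempty := card_pos.1 ((card_pos.2 hS₀.2).trans_le (hSmax S₀ hS₀tight))
  have hSρ : outDensity G S A = ρ := by
    rw [outDensity_of_disjoint G hS.1, hS.2, mul_div_cancel_right₀ _ (by positivity)]
  refine ⟨S, hSne, hS.1, hSρ ▸ hρ, fun T hTA hST => hSρ ▸ (hρ T hTA).lt_of_ne fun h => ?_⟩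
  exact (card_lt_card hST).not_ge (hSmax T (mem_filter.2 ⟨(hmem T).2 hTA, h⟩))

theorem eq_union_of_locallyDense {A S C : Finset V} (hSA : Disjoint S A)
    (hmax : ∀ T, Disjoint T A → (#(margEdges G T A) : ℚ) ≤ outDensity G S A * #T)
    (hC : LocallyDense G C) (hAC : A ⊂ C) (hCAS : C ⊆ A ∪ S) : C = A ∪ S := by
  obtain ⟨P, hPA, rfl⟩ : ∃ P, Disjoint P A ∧ C = A ∪ P :=
    ⟨C \ A, sdiff_disjoint, (union_sdiff_of_subset hAC.1).symm⟩
  have hP : P.Nonempty := nonempty_iff_ne_empty.2 fun h => hAC.2 (by simp [h])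
  have hPS : P ⊆ S := by grind [disjoint_left]
  refine congrArg _ (hPS.antisymm ?_)
  by_contra hSP
  have hRest : (S \ P).Nonempty := sdiff_nonempty.2 hSP
  have hRestAP : Disjoint (S \ P) (A ∪ P) := by grind [disjoint_left]
  have hlt : outDensity G (S \ P) (A ∪ P) < outDensity G P A := by
    refine not_le.1 fun h => hC ⟨P, S \ P, hP, hRest, subset_union_right,
      disjoint_iff_inter_eq_empty.1 hRestAP, ?_⟩
    rwa [union_sdiff_cancel_right hPA.symm]
  have hPρ : outDensity G P A ≤ outDensity G S A := by
    have := hmax P hPA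
    rw [card_margEdges_eq_outDensity_mul G hPA] at this
    exact le_of_mul_le_mul_right this (by positivity)
  have hsplit := card_margEdges_union G hRestAP
  rw [union_sdiff_of_subset hPS] at hsplit
  have hS_eq := card_margEdges_eq_outDensity_mul G hSA
  rw [hsplit, ← card_sdiff_add_card_eq_card hPS] at hS_eq
  push_cast at hS_eq
  rw [card_margEdges_eq_outDensity_mul G hPA, card_margEdges_eq_outDensity_mul G hRestAP] at hS_eq
  have : outDensity G (S \ P) (A ∪ P) * #(S \ P) < outDensity G S A * #(S \ P) :=
    mul_lt_mul_of_pos_right (hlt.trans_le hPρ) (by positivity)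
  linarith [mul_le_mul_of_nonneg_right hPρ (Nat.cast_nonneg (α := ℚ) #P)]

theorem outDensity_le_of_forall_card_margEdges_le {A W : Finset V} {ρ : ℚ}
    (hmax : ∀ T, Disjoint T A → (#(margEdges G T A) : ℚ) ≤ ρ * #T) (hAW : A ⊂ W) :
    outDensity G W A ≤ ρ := by
  rw [outDensity, div_le_iff₀ (by simpa [card_pos] using sdiff_nonempty.2 hAW.2)]
  exact hmax _ sdiff_disjoint

end

theorem locallyDense_maximal [Fintype V] [DecidableEq V] (G : SimpleGraph V) [DecidableRel G.Adj]
    (k : ℕ) (B : ℕ → Finset V)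
    (hchain : ∀ i j, i < j → j ≤ k → B i ⊂ B j)
    (hall : ∀ W : Finset V, LocallyDense G W ↔ ∃ i ≤ k, W = B i)
 :
    B 0 = ∅ ∧ B k = Finset.univ ∧
    ∀ i, 1 ≤ i → i ≤ k → ∀ W : Finset V, B (i - 1) ⊂ W →
      outDensity G W (B (i - 1)) ≤ outDensity G (B i) (B (i - 1)) := by
  have hB : StrictMonoOn B (Set.Iic k) := fun i _ j hj hij => hchain i j hij hj
  obtain ⟨i₀, hi₀, h₀⟩ := (hall ∅).1 (locallyDense_empty G)
  obtain ⟨i₁, hi₁, h₁⟩ := (hall univ).1 (locallyDense_univ G)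
  refine ⟨subset_empty.1 (h₀ ▸ hB.monotoneOn (Nat.zero_le k) hi₀ (Nat.zero_le i₀)),
    univ_subset_iff.1 (h₁ ▸ hB.monotoneOn hi₁ (le_refl k) hi₁), ?_⟩
  intro i hi hik W hW
  have hA : LocallyDense G (B (i - 1)) := (hall _).2 ⟨i - 1, by omega, rfl⟩
  have hAi : B (i - 1) ⊂ B i := hchain _ _ (by omega) hik
  obtain ⟨S, hS, hSA, hmax, hstrict⟩ :=
    exists_maximal_densest G (ssubset_univ_iff.1 (hAi.trans_subset (subset_univ _)))
  obtain ⟨j, hj, hBj⟩ := (hall _).1 (locallyDense_union_of_maximal G hA hS hSA hmax hstrict)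
  have hij : i ≤ j := by
    have := (hB.lt_iff_lt (show i - 1 ≤ k by omega) hj).1
      (hBj ▸ ssubset_union_of_disjoint hS hSA)
    omega
  have hBi : B i = B (i - 1) ∪ S :=
    eq_union_of_locallyDense G hSA hmax ((hall _).2 ⟨i, hik, rfl⟩) hAi
      (hBj ▸ hB.monotoneOn hik hj hij)
  rw [hBi, outDensity_union_left G hSA]
  exact outDensity_le_of_forall_card_margEdges_le G hmax hW
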